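/- arXiv:0806.0066 — 5 statements merged into one kernel-verified Lean document; each statement's English description precedes it below -/
import Mathlib

section
/- Let M and S be real symmetric 2×2 matrices with entries m11, m12, m22 and s11, s12, s22. If the 4×4 matrix with rows (m11, 2m12, m22, 0), (0, m11, 2m12, m22), (s11, 2s12, s22, 0), (0, s11, 2s12, s22) has determinant zero, and M is positive definite, then M and S are linearly dependent (i.e., S is a scalar multiple of M). -/
open Matrix

theorem stmt0 (m11 m12 m22 s11 s12 s22 : ℝ)
    (M S : Matrix (Fin 2) (Fin 2) ℝ)
    (hM : M = !![m11, m12; m12, m22]) (hS : S = !![s11, s12; s12, s22])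
    (hdet : (!![m11, 2*m12, m22, 0;
                0, m11, 2*m12, m22;
                s11, 2*s12, s22, 0;
                0, s11, 2*s12, s22] : Matrix (Fin 4) (Fin 4) ℝ).det = 0)
    (hpos : ∀ x : Fin 2 → ℝ, x ≠ 0 → 0 < x ⬝ᵥ M.mulVec x) :
    ∃ t : ℝ, S = t • M := by
  subst hM hS
  have h1 : (0:ℝ) < m11 := by
    have := hpos ![1, 0] (by
      intro h
      have := congrFun h 0
      simp at this)
    simpa [Matrix.mulVec, dotProduct, Fin.sum_univ_two] using this
  have h2 : (0:ℝ) < m11 * (m11 * m22 - m12 * m12) := by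
    have := hpos ![m12, -m11] (by
      intro h
      have := congrFun h 1
      simp at this
      linarith)
    simp [Matrix.mulVec, dotProduct, Fin.sum_univ_two] at this
    nlinarith [this]
  have hD : (0:ℝ) < m11 * m22 - m12 * m12 := by
    nlinarith [h1, h2]
  simp [Matrix.det_succ_row_zero, Fin.sum_univ_succ, Fin.succAbove] at hdet
  ring_nf at hdet
  -- identity: m11^2 * (b^2 - 4ac) = (m11*b - 2*m12*a)^2 + 4*a^2*(m11*m22 - m12^2)
  have key0 : (m11*(m11*s22 - s11*m22) - 2*m12*(m11*s12 - s11*m12))^2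
      + 4*(m11*s12 - s11*m12)^2*(m11*m22 - m12*m12) = 0 := by
    linear_combination (m11^2) * hdet
  have ha : m11 * s12 - s11 * m12 = 0 := by
    have hprod : (m11*s12 - s11*m12)^2 * (m11*m22 - m12*m12) = 0 := by
      have h3 := sq_nonneg (m11*(m11*s22 - s11*m22) - 2*m12*(m11*s12 - s11*m12))
      have h4 := mul_nonneg (sq_nonneg (m11*s12 - s11*m12)) hD.le
      linarith
    rcases mul_eq_zero.mp hprod with h | h
    · exact pow_eq_zero_iff (n := 2) (by norm_num) |>.mp h
    · linarith
  have hb : m11 * s22 - s11 * m22 = 0 := by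
    have h0 : (m11*s22 - s11*m22)^2 = 0 := by
      linear_combination hdet + (4*(m12*s22 - s12*m22)) * ha
    exact pow_eq_zero_iff (n := 2) (by norm_num) |>.mp h0
  have key : m11 * s12 - s11 * m12 = 0 ∧ m11 * s22 - s11 * m22 = 0 := ⟨ha, hb⟩
  obtain ⟨ha, hb⟩ := key
  refine ⟨s11 / m11, ?_⟩
  ext i j
  fin_cases i <;> fin_cases j <;>
    simp [Matrix.smul_apply] <;> field_simp <;> linarith
end

section
/- Let A, B, C, D be real symmetric 2×2 matrices satisfying the Legendre–Hadamard ellipticity condition, and suppose it is not the case that B, C, D are all scalar multiples of A. Then there exist θ ∈ [0, 2π] and real numbers a, b, c such that the map with components u¹ = cos θ·(x²+y²) − sin θ·p(x,y), u² = sin θ·(x²+y²) + cos θ·p(x,y), where p(x,y) = (1/2)(a x² + 2bxy + c y²), satisfies div(A∇u¹ + B∇u²) = 0 and div(C∇u¹ + D∇u²) = 0 on ℝ². -/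
open Matrix Real

private lemma solve2 (u1 u2 u3 v1 v2 v3 r s : ℝ)
    (h : u1*v2 - u2*v1 ≠ 0 ∨ u1*v3 - u3*v1 ≠ 0 ∨ u2*v3 - u3*v2 ≠ 0) :
    ∃ p1 p2 p3 : ℝ, u1*p1 + 2*u2*p2 + u3*p3 = r ∧ v1*p1 + 2*v2*p2 + v3*p3 = s := by
  have hD : ∀ x : ℝ, x = (u1^2+2*u2^2+u3^2)*(v1^2+2*v2^2+v3^2) - (u1*v1+2*u2*v2+u3*v3)^2 →
      x = 2*(u1*v2 - u2*v1)^2 + (u1*v3 - u3*v1)^2 + 2*(u2*v3 - u3*v2)^2 := by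
    intro x hx; rw [hx]; ring
  set Δ := (u1^2+2*u2^2+u3^2)*(v1^2+2*v2^2+v3^2) - (u1*v1+2*u2*v2+u3*v3)^2 with hΔ
  have hDpos : 0 < Δ := by
    rw [hD Δ hΔ]
    rcases h with h | h | h <;> positivity
  have hDne : Δ ≠ 0 := ne_of_gt hDpos
  set lam := (r*(v1^2+2*v2^2+v3^2) - s*(u1*v1+2*u2*v2+u3*v3))/Δ with hlam
  set mu := (s*(u1^2+2*u2^2+u3^2) - r*(u1*v1+2*u2*v2+u3*v3))/Δ with hmu
  refine ⟨lam*u1 + mu*v1, lam*u2 + mu*v2, lam*u3 + mu*v3, ?_, ?_⟩ <;>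
    · rw [hlam, hmu]
      field_simp
      rw [hΔ]
      ring

private lemma dichotomy (u1 u2 u3 v1 v2 v3 : ℝ) (hu : u1 ≠ 0 ∨ u2 ≠ 0 ∨ u3 ≠ 0) :
    (∃ γ : ℝ, v1 = γ*u1 ∧ v2 = γ*u2 ∧ v3 = γ*u3) ∨
      (u1*v2 - u2*v1 ≠ 0 ∨ u1*v3 - u3*v1 ≠ 0 ∨ u2*v3 - u3*v2 ≠ 0) := by
  by_cases h12 : u1*v2 - u2*v1 = 0
  · by_cases h13 : u1*v3 - u3*v1 = 0
    · by_cases h23 : u2*v3 - u3*v2 = 0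
      · left
        have hN : u1^2 + u2^2 + u3^2 ≠ 0 := by
          rcases hu with h | h | h <;> positivity
        refine ⟨(u1*v1 + u2*v2 + u3*v3)/(u1^2 + u2^2 + u3^2), ?_, ?_, ?_⟩
        · rw [div_mul_eq_mul_div, eq_div_iff hN]; linear_combination (-u2)*h12 + (-u3)*h13
        · rw [div_mul_eq_mul_div, eq_div_iff hN]; linear_combination u1*h12 + (-u3)*h23
        · rw [div_mul_eq_mul_div, eq_div_iff hN]; linear_combination u1*h13 + u2*h23
      · right; right; right; exact h23
    · right; right; left; exact h13
  · right; left; exact h12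

private lemma reduce (M N : Matrix (Fin 2) (Fin 2) ℝ) (θ a b c : ℝ)
    (hM : M 1 0 = M 0 1) (hN : N 1 0 = N 0 1)
    (h : Real.cos θ * (2*(M 0 0 + M 1 1)) + Real.cos θ * (N 0 0 * a + 2 * N 0 1 * b + N 1 1 * c)
       + Real.sin θ * (2*(N 0 0 + N 1 1))
       - Real.sin θ * (M 0 0 * a + 2 * M 0 1 * b + M 1 1 * c) = 0) :
    (∑ i, ∑ j, M i j * (Real.cos θ • !![(2:ℝ), 0; 0, 2] - Real.sin θ • !![a, b; b, c]) i j)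
      + (∑ i, ∑ j, N i j * (Real.sin θ • !![(2:ℝ), 0; 0, 2] + Real.cos θ • !![a, b; b, c]) i j)
      = 0 := by
  simp only [Fin.sum_univ_two, Matrix.sub_apply, Matrix.add_apply, Matrix.smul_apply,
    smul_eq_mul, Matrix.cons_val', Matrix.cons_val_zero, Matrix.cons_val_one, Matrix.head_cons,
    Matrix.empty_val', Matrix.cons_val_fin_one, Matrix.head_fin_const, Matrix.of_apply]
  linear_combination h - (Real.sin θ*b)*hM + (Real.cos θ*b)*hN

theorem stmt10 (A B C D : Matrix (Fin 2) (Fin 2) ℝ)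
    (hA : A.IsSymm) (hB : B.IsSymm) (hC : C.IsSymm) (hD : D.IsSymm)
    (hLH : ∀ ξ η : Fin 2 → ℝ, ξ ≠ 0 → η ≠ 0 →
      0 < (η 0)^2 * (ξ ⬝ᵥ A.mulVec ξ) + (η 0) * (η 1) * (ξ ⬝ᵥ (B + C).mulVec ξ)
          + (η 1)^2 * (ξ ⬝ᵥ D.mulVec ξ))
    (hnot : ¬ ∃ σ γ δ : ℝ, B = σ • A ∧ C = γ • A ∧ D = δ • A) :
    ∃ θ ∈ Set.Icc (0:ℝ) (2 * Real.pi), ∃ a b c : ℝ,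
      -- Hessians of u¹ = cos θ (x²+y²) - sin θ p and u² = sin θ (x²+y²) + cos θ p
      (∑ i, ∑ j, A i j * (Real.cos θ • !![(2:ℝ), 0; 0, 2] - Real.sin θ • !![a, b; b, c]) i j)
        + (∑ i, ∑ j, B i j * (Real.sin θ • !![(2:ℝ), 0; 0, 2] + Real.cos θ • !![a, b; b, c]) i j) = 0 ∧
      (∑ i, ∑ j, C i j * (Real.cos θ • !![(2:ℝ), 0; 0, 2] - Real.sin θ • !![a, b; b, c]) i j)
        + (∑ i, ∑ j, D i j * (Real.sin θ • !![(2:ℝ), 0; 0, 2] + Real.cos θ • !![a, b; b, c]) i j) = 0 := by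
  have hA' : A 1 0 = A 0 1 := hA.apply 0 1
  have hB' : B 1 0 = B 0 1 := hB.apply 0 1
  have hC' : C 1 0 = C 0 1 := hC.apply 0 1
  have hD' : D 1 0 = D 0 1 := hD.apply 0 1
  have he0 : (![1,0] : Fin 2 → ℝ) ≠ 0 := by
    intro h; have := congrFun h 0; simp at this
  have he1 : (![0,1] : Fin 2 → ℝ) ≠ 0 := by
    intro h; have := congrFun h 1; simp at this
  have ha1 : 0 < A 0 0 := by
    have := hLH ![1,0] ![1,0] he0 he0
    simpa [dotProduct, Matrix.mulVec, Fin.sum_univ_two] using this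
  have hd1 : 0 < D 0 0 := by
    have := hLH ![1,0] ![0,1] he0 he1
    simpa [dotProduct, Matrix.mulVec, Fin.sum_univ_two] using this
  have hpi := Real.pi_pos
  rcases dichotomy (A 0 0) (A 0 1) (A 1 1) (C 0 0) (C 0 1) (C 1 1)
      (Or.inl (ne_of_gt ha1)) with ⟨γ, hc1, hc2, hc3⟩ | hAC
  · -- C = γ A
    rcases dichotomy (D 0 0) (D 0 1) (D 1 1) (B 0 0) (B 0 1) (B 1 1)
        (Or.inl (ne_of_gt hd1)) with ⟨β, hb1, hb2, hb3⟩ | hDB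
    · -- B = β D
      rcases dichotomy (A 0 0) (A 0 1) (A 1 1) (D 0 0) (D 0 1) (D 1 1)
          (Or.inl (ne_of_gt ha1)) with ⟨δ, hd1', hd2', hd3'⟩ | hAD
      · -- D = δ A : contradiction with hnot
        exfalso
        apply hnot
        refine ⟨β*δ, γ, δ, ?_, ?_, ?_⟩
        · ext i j
          fin_cases i <;> fin_cases j <;>
            simp only [Matrix.smul_apply, smul_eq_mul, Fin.zero_eta, Fin.mk_one]
          · linear_combination hb1 + β*hd1'
          · linear_combination hb2 + β*hd2'
          · linear_combination hB' + hb2 + β*hd2' - β*δ*hA'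
          · linear_combination hb3 + β*hd3'
        · ext i j
          fin_cases i <;> fin_cases j <;>
            simp only [Matrix.smul_apply, smul_eq_mul, Fin.zero_eta, Fin.mk_one]
          · linear_combination hc1
          · linear_combination hc2
          · linear_combination hC' + hc2 - γ*hA'
          · linear_combination hc3
        · ext i j
          fin_cases i <;> fin_cases j <;>
            simp only [Matrix.smul_apply, smul_eq_mul, Fin.zero_eta, Fin.mk_one]
          · linear_combination hd1'
          · linear_combination hd2'
          · linear_combination hD' + hd2' - δ*hA'
          · linear_combination hd3'
      · -- A, D independent
        by_cases hbg : β*γ = 1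
        · -- θ = 0, p = t * D-vector
          set N := D 0 0^2 + 2*D 0 1^2 + D 1 1^2 with hN
          have hNpos : 0 < N := by rw [hN]; positivity
          have hNne : N ≠ 0 := ne_of_gt hNpos
          set t := (-2*(C 0 0 + C 1 1))/N with ht
          have hDeq : D 0 0 * (t*D 0 0) + 2*D 0 1*(t*D 0 1) + D 1 1*(t*D 1 1)
              = -2*(C 0 0 + C 1 1) := by
            rw [ht, hN]; field_simp; ring
          refine ⟨0, ⟨le_refl 0, by linarith⟩, t*D 0 0, t*D 0 1, t*D 1 1, ?_, ?_⟩
          · apply reduce _ _ _ _ _ _ hA' hB'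
            rw [Real.cos_zero, Real.sin_zero]
            have hBeq : B 0 0 * (t*D 0 0) + 2*B 0 1*(t*D 0 1) + B 1 1*(t*D 1 1)
                = -2*(A 0 0 + A 1 1) := by
              rw [hb1, hb2, hb3]
              calc β*D 0 0 * (t*D 0 0) + 2*(β*D 0 1)*(t*D 0 1) + β*D 1 1*(t*D 1 1)
                  = β * (D 0 0 * (t*D 0 0) + 2*D 0 1*(t*D 0 1) + D 1 1*(t*D 1 1)) := by ring
                _ = β * (-2*(C 0 0 + C 1 1)) := by rw [hDeq]
                _ = -2*(A 0 0 + A 1 1) := by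
                    rw [hc1, hc3]; linear_combination (-2*(A 0 0 + A 1 1))*hbg
            linear_combination hBeq
          · apply reduce _ _ _ _ _ _ hC' hD'
            rw [Real.cos_zero, Real.sin_zero]
            linear_combination hDeq
        · -- θ = π/4, use B-A and D-C independent
          have hfac : β*γ - 1 ≠ 0 := sub_ne_zero_of_ne hbg
          have hmin : (B 0 0 - A 0 0)*(D 0 1 - C 0 1) - (B 0 1 - A 0 1)*(D 0 0 - C 0 0) ≠ 0 ∨
              (B 0 0 - A 0 0)*(D 1 1 - C 1 1) - (B 1 1 - A 1 1)*(D 0 0 - C 0 0) ≠ 0 ∨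
              (B 0 1 - A 0 1)*(D 1 1 - C 1 1) - (B 1 1 - A 1 1)*(D 0 1 - C 0 1) ≠ 0 := by
            rcases hAD with h | h | h
            · left
              have heq : (B 0 0 - A 0 0)*(D 0 1 - C 0 1) - (B 0 1 - A 0 1)*(D 0 0 - C 0 0)
                  = (β*γ - 1)*(A 0 0 * D 0 1 - A 0 1 * D 0 0) := by
                rw [hb1, hb2, hc1, hc2]; ring
              rw [heq]; exact mul_ne_zero hfac h
            · right; left
              have heq : (B 0 0 - A 0 0)*(D 1 1 - C 1 1) - (B 1 1 - A 1 1)*(D 0 0 - C 0 0)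
                  = (β*γ - 1)*(A 0 0 * D 1 1 - A 1 1 * D 0 0) := by
                rw [hb1, hb3, hc1, hc3]; ring
              rw [heq]; exact mul_ne_zero hfac h
            · right; right
              have heq : (B 0 1 - A 0 1)*(D 1 1 - C 1 1) - (B 1 1 - A 1 1)*(D 0 1 - C 0 1)
                  = (β*γ - 1)*(A 0 1 * D 1 1 - A 1 1 * D 0 1) := by
                rw [hb2, hb3, hc2, hc3]; ring
              rw [heq]; exact mul_ne_zero hfac h
          obtain ⟨p1, p2, p3, hp1, hp2⟩ := solve2 (B 0 0 - A 0 0) (B 0 1 - A 0 1) (B 1 1 - A 1 1)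
            (D 0 0 - C 0 0) (D 0 1 - C 0 1) (D 1 1 - C 1 1)
            (-2*(A 0 0 + A 1 1) - 2*(B 0 0 + B 1 1)) (-2*(C 0 0 + C 1 1) - 2*(D 0 0 + D 1 1)) hmin
          refine ⟨Real.pi/4, ⟨by linarith, by linarith⟩, p1, p2, p3, ?_, ?_⟩
          · apply reduce _ _ _ _ _ _ hA' hB'
            rw [Real.cos_pi_div_four, Real.sin_pi_div_four]
            linear_combination (Real.sqrt 2/2) * hp1
          · apply reduce _ _ _ _ _ _ hC' hD'
            rw [Real.cos_pi_div_four, Real.sin_pi_div_four]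
            linear_combination (Real.sqrt 2/2) * hp2
    · -- D, B independent : θ = 0
      obtain ⟨p1, p2, p3, hp1, hp2⟩ := solve2 (D 0 0) (D 0 1) (D 1 1) (B 0 0) (B 0 1) (B 1 1)
        (-2*(C 0 0 + C 1 1)) (-2*(A 0 0 + A 1 1)) hDB
      refine ⟨0, ⟨le_refl 0, by linarith⟩, p1, p2, p3, ?_, ?_⟩
      · apply reduce _ _ _ _ _ _ hA' hB'
        rw [Real.cos_zero, Real.sin_zero]
        linear_combination hp2
      · apply reduce _ _ _ _ _ _ hC' hD'
        rw [Real.cos_zero, Real.sin_zero]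
        linear_combination hp1
  · -- A, C independent : θ = π/2
    obtain ⟨p1, p2, p3, hp1, hp2⟩ := solve2 (A 0 0) (A 0 1) (A 1 1) (C 0 0) (C 0 1) (C 1 1)
      (2*(B 0 0 + B 1 1)) (2*(D 0 0 + D 1 1)) hAC
    refine ⟨Real.pi/2, ⟨by linarith, by linarith⟩, p1, p2, p3, ?_, ?_⟩
    · apply reduce _ _ _ _ _ _ hA' hB'
      rw [Real.cos_pi_div_two, Real.sin_pi_div_two]
      linear_combination -hp1
    · apply reduce _ _ _ _ _ _ hC' hD'
      rw [Real.cos_pi_div_two, Real.sin_pi_div_two]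
      linear_combination -hp2
end

section
/- Let A, B, C, D be real symmetric 2×2 matrices satisfying the Legendre–Hadamard ellipticity condition, and suppose it is not the case that B, C, D are all scalar multiples of A. Then there exist θ ∈ [0, 2π] and real numbers a, b, c, d such that the map with components u¹ = cos θ·x(x²+y²) − sin θ·q(x,y), u² = sin θ·x(x²+y²) + cos θ·q(x,y), where q(x,y) = (1/2)(a x³/3 + b x²y + c x y² + d y³/3), satisfies div(A∇u¹ + B∇u²) = 0 and div(C∇u¹ + D∇u²) = 0 on ℝ². -/
open Matrix Real

/-- Hessian of `x (x²+y²)` at `(x, y)`. -/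
def Hc0 (x y : ℝ) : Matrix (Fin 2) (Fin 2) ℝ := !![6*x, 2*y; 2*y, 2*x]

/-- Hessian of `q(x,y) = (1/2)(a x³/3 + b x² y + c x y² + d y³/3)` at `(x, y)`. -/
def Hcq (a b c d x y : ℝ) : Matrix (Fin 2) (Fin 2) ℝ :=
  !![a*x + b*y, b*x + c*y; b*x + c*y, c*x + d*y]

lemma key (p1 p2 p3 q1 q2 q3 : ℝ) (hp1 : 0 < p1) (hpd : p2^2 < p1*p3)
    (hres : (p1*q3-p3*q1)^2 - 4*(p1*q2-p2*q1)*(p2*q3-p3*q2) = 0) :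
    p1*q2 = p2*q1 ∧ p1*q3 = p3*q1 := by
  set u := p1*q2-p2*q1 with hu
  set w := p1*q3-p3*q1 with hw
  set z := p2*q3-p3*q2 with hz
  have hp3 : 0 < p3 := by nlinarith [sq_nonneg p2]
  have hid : p1*z + p3*u = p2*w := by rw [hu, hw, hz]; ring
  have hsq : (p1*z + p3*u)^2 = p2^2 * w^2 := by rw [hid]; ring
  have h4 : w^2 = 4*(u*z) := by linarith
  have huz0 : u*z = 0 := by
    have hle : u*z ≤ 0 := by nlinarith [sq_nonneg (p1*z - p3*u), mul_pos hp1 hp3]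
    nlinarith [sq_nonneg w]
  have hw0 : w = 0 := by
    have : w^2 = 0 := by rw [h4, huz0]; ring
    exact pow_eq_zero_iff (n := 2) (by norm_num) |>.mp this
  have hsum : p1*z + p3*u = 0 := by rw [hid, hw0]; ring
  have hu0 : u = 0 := by
    have h1 : (p3*u)^2 = 0 := by linear_combination (p3*u) * hsum - p1*p3*huz0
    have := pow_eq_zero_iff (n := 2) (by norm_num) |>.mp h1
    rcases mul_eq_zero.mp this with h | h
    · exact absurd h (ne_of_gt hp3)
    · exact h
  constructor
  · linarith [hu0, hu]
  · linarith [hw0, hw]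

lemma det_four (M : Matrix (Fin 4) (Fin 4) ℝ) : M.det =
    M 0 0 * (M 1 1*(M 2 2*M 3 3 - M 2 3*M 3 2) - M 1 2*(M 2 1*M 3 3 - M 2 3*M 3 1)
      + M 1 3*(M 2 1*M 3 2 - M 2 2*M 3 1))
  - M 0 1 * (M 1 0*(M 2 2*M 3 3 - M 2 3*M 3 2) - M 1 2*(M 2 0*M 3 3 - M 2 3*M 3 0)
      + M 1 3*(M 2 0*M 3 2 - M 2 2*M 3 0))
  + M 0 2 * (M 1 0*(M 2 1*M 3 3 - M 2 3*M 3 1) - M 1 1*(M 2 0*M 3 3 - M 2 3*M 3 0)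
      + M 1 3*(M 2 0*M 3 1 - M 2 1*M 3 0))
  - M 0 3 * (M 1 0*(M 2 1*M 3 2 - M 2 2*M 3 1) - M 1 1*(M 2 0*M 3 2 - M 2 2*M 3 0)
      + M 1 2*(M 2 0*M 3 1 - M 2 1*M 3 0)) := by
  rw [Matrix.det_succ_row_zero]
  simp [Fin.sum_univ_succ, Matrix.det_fin_three, Matrix.submatrix_apply, Fin.succAbove,
    show ((2:Fin 3).succ : Fin 4) = 3 by decide, show (Fin.castSucc 2 : Fin 4) = 2 by decide,
    show ((1:Fin 2).succ : Fin 3) = 2 by decide, show ((0:Fin 1).succ : Fin 2) = 1 by decide]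
  ring

/-- The 4×4 system matrix. -/
def Mx (A B C D : Matrix (Fin 2) (Fin 2) ℝ) (co si : ℝ) : Matrix (Fin 4) (Fin 4) ℝ :=
  !![ -si*A 0 0 + co*B 0 0, -si*(2*A 0 1) + co*(2*B 0 1), -si*A 1 1 + co*B 1 1, 0;
      0, -si*A 0 0 + co*B 0 0, -si*(2*A 0 1) + co*(2*B 0 1), -si*A 1 1 + co*B 1 1;
      -si*C 0 0 + co*D 0 0, -si*(2*C 0 1) + co*(2*D 0 1), -si*C 1 1 + co*D 1 1, 0;
      0, -si*C 0 0 + co*D 0 0, -si*(2*C 0 1) + co*(2*D 0 1), -si*C 1 1 + co*D 1 1 ]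

def Wv (A B C D : Matrix (Fin 2) (Fin 2) ℝ) (co si : ℝ) : Fin 4 → ℝ :=
  ![ -(co*(6*A 0 0+2*A 1 1) + si*(6*B 0 0+2*B 1 1)), -(co*(4*A 0 1) + si*(4*B 0 1)),
     -(co*(6*C 0 0+2*C 1 1) + si*(6*D 0 0+2*D 1 1)), -(co*(4*C 0 1) + si*(4*D 0 1)) ]

lemma solve (A B C D : Matrix (Fin 2) (Fin 2) ℝ)
    (hA : A.IsSymm) (hB : B.IsSymm) (hC : C.IsSymm) (hD : D.IsSymm)
    (co si : ℝ) (hcs : co^2 + si^2 = 1)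
    (hdet : (Mx A B C D co si).det ≠ 0) :
    ∃ θ ∈ Set.Icc (0:ℝ) (2 * Real.pi), ∃ a b c d : ℝ, ∀ x y : ℝ,
      (∑ i, ∑ j, A i j * (Real.cos θ • Hc0 x y - Real.sin θ • Hcq a b c d x y) i j)
        + (∑ i, ∑ j, B i j * (Real.sin θ • Hc0 x y + Real.cos θ • Hcq a b c d x y) i j) = 0 ∧
      (∑ i, ∑ j, C i j * (Real.cos θ • Hc0 x y - Real.sin θ • Hcq a b c d x y) i j)
        + (∑ i, ∑ j, D i j * (Real.sin θ • Hc0 x y + Real.cos θ • Hcq a b c d x y) i j) = 0 := by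
  have hco1 : -1 ≤ co ∧ co ≤ 1 := by constructor <;> nlinarith [sq_nonneg si]
  set θ := if 0 ≤ si then Real.arccos co else 2*Real.pi - Real.arccos co with hθ
  have hcos : Real.cos θ = co := by
    rw [hθ]; split
    · exact Real.cos_arccos hco1.1 hco1.2
    · rw [Real.cos_sub, Real.cos_two_pi, Real.sin_two_pi, Real.cos_arccos hco1.1 hco1.2]; ring
  have hsin : Real.sin θ = si := by
    have hs : Real.sin (Real.arccos co) = |si| := by
      rw [Real.sin_arccos, show 1 - co^2 = si^2 by linarith, Real.sqrt_sq_eq_abs]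
    rw [hθ]; split
    · rw [hs]; exact abs_of_nonneg ‹_›
    · rw [Real.sin_sub, Real.cos_two_pi, Real.sin_two_pi, hs]
      rw [abs_of_neg (by linarith [not_le.mp ‹¬ 0 ≤ si›])]; ring
  have hmem : θ ∈ Set.Icc (0:ℝ) (2*Real.pi) := by
    have h1 := Real.arccos_nonneg co
    have h2 := Real.arccos_le_pi co
    have h3 := Real.pi_pos
    rw [hθ]; split <;> constructor <;> linarith
  set v : Fin 4 → ℝ := (Mx A B C D co si)⁻¹.mulVec (Wv A B C D co si) with hv
  have hMv : (Mx A B C D co si).mulVec v = Wv A B C D co si := by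
    rw [hv, Matrix.mulVec_mulVec, Matrix.mul_nonsing_inv _ (isUnit_iff_ne_zero.mpr hdet),
      Matrix.one_mulVec]
  have h0 := congrFun hMv 0
  have h1 := congrFun hMv 1
  have h2 := congrFun hMv 2
  have h3 := congrFun hMv 3
  simp [Mx, Wv, Matrix.mulVec, dotProduct, Fin.sum_univ_four] at h0 h1 h2 h3
  have ha10 : A 1 0 = A 0 1 := hA.apply 0 1
  have hb10 : B 1 0 = B 0 1 := hB.apply 0 1
  have hc10 : C 1 0 = C 0 1 := hC.apply 0 1
  have hd10 : D 1 0 = D 0 1 := hD.apply 0 1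
  refine ⟨θ, hmem, v 0, v 1, v 2, v 3, fun x y => ?_⟩
  rw [hcos, hsin]
  constructor
  · simp only [Matrix.smul_apply, Matrix.sub_apply, Matrix.add_apply, smul_eq_mul,
      Hc0, Hcq, Fin.sum_univ_two, Matrix.of_apply, Matrix.cons_val', Matrix.cons_val_zero,
      Matrix.cons_val_one, Matrix.head_cons, Matrix.empty_val', Matrix.cons_val_fin_one,
      Matrix.head_fin_const]
    rw [ha10, hb10]
    linear_combination x * h0 + y * h1
  · simp only [Matrix.smul_apply, Matrix.sub_apply, Matrix.add_apply, smul_eq_mul,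
      Hc0, Hcq, Fin.sum_univ_two, Matrix.of_apply, Matrix.cons_val', Matrix.cons_val_zero,
      Matrix.cons_val_one, Matrix.head_cons, Matrix.empty_val', Matrix.cons_val_fin_one,
      Matrix.head_fin_const]
    rw [hc10, hd10]
    linear_combination x * h2 + y * h3

set_option maxHeartbeats 1000000 in
lemma detMx01 (A B C D : Matrix (Fin 2) (Fin 2) ℝ) :
    (Mx A B C D 0 1).det =
      (A 0 0*C 1 1 - A 1 1*C 0 0)^2
        - 4*(A 0 0*C 0 1 - A 0 1*C 0 0)*(A 0 1*C 1 1 - A 1 1*C 0 1) := by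
  rw [det_four]
  simp [Mx]
  ring

set_option maxHeartbeats 1000000 in
lemma detMx10 (A B C D : Matrix (Fin 2) (Fin 2) ℝ) :
    (Mx A B C D 1 0).det =
      (D 0 0*B 1 1 - D 1 1*B 0 0)^2
        - 4*(D 0 0*B 0 1 - D 0 1*B 0 0)*(D 0 1*B 1 1 - D 1 1*B 0 1) := by
  rw [det_four]
  simp [Mx]
  ring

set_option maxHeartbeats 1000000 in
lemma detMxtt (A B C D : Matrix (Fin 2) (Fin 2) ℝ) (t σ γ : ℝ)
    (hB00 : B 0 0 = σ*D 0 0) (hB01 : B 0 1 = σ*D 0 1) (hB11 : B 1 1 = σ*D 1 1)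
    (hC00 : C 0 0 = γ*A 0 0) (hC01 : C 0 1 = γ*A 0 1) (hC11 : C 1 1 = γ*A 1 1) :
    (Mx A B C D t t).det =
      t^4 * ((σ*γ - 1)^2 * ((A 0 0*D 1 1 - A 1 1*D 0 0)^2
        - 4*(A 0 0*D 0 1 - A 0 1*D 0 0)*(A 0 1*D 1 1 - A 1 1*D 0 1))) := by
  rw [det_four]
  simp [Mx]
  rw [hB00, hB01, hB11, hC00, hC01, hC11]
  ring

theorem stmt11 (A B C D : Matrix (Fin 2) (Fin 2) ℝ)
    (hA : A.IsSymm) (hB : B.IsSymm) (hC : C.IsSymm) (hD : D.IsSymm)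
    (hLH : ∀ ξ η : Fin 2 → ℝ, ξ ≠ 0 → η ≠ 0 →
      0 < (η 0)^2 * (ξ ⬝ᵥ A.mulVec ξ) + (η 0) * (η 1) * (ξ ⬝ᵥ (B + C).mulVec ξ)
          + (η 1)^2 * (ξ ⬝ᵥ D.mulVec ξ))
    (hnot : ¬ ∃ σ γ δ : ℝ, B = σ • A ∧ C = γ • A ∧ D = δ • A) :
    ∃ θ ∈ Set.Icc (0:ℝ) (2 * Real.pi), ∃ a b c d : ℝ, ∀ x y : ℝ,
      -- Hessians of u¹ = cos θ x(x²+y²) - sin θ q and u² = sin θ x(x²+y²) + cos θ q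
      (∑ i, ∑ j, A i j * (Real.cos θ • Hc0 x y - Real.sin θ • Hcq a b c d x y) i j)
        + (∑ i, ∑ j, B i j * (Real.sin θ • Hc0 x y + Real.cos θ • Hcq a b c d x y) i j) = 0 ∧
      (∑ i, ∑ j, C i j * (Real.cos θ • Hc0 x y - Real.sin θ • Hcq a b c d x y) i j)
        + (∑ i, ∑ j, D i j * (Real.sin θ • Hc0 x y + Real.cos θ • Hcq a b c d x y) i j) = 0 := by
  have ha10 : A 1 0 = A 0 1 := hA.apply 0 1
  have hb10 : B 1 0 = B 0 1 := hB.apply 0 1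
  have hc10 : C 1 0 = C 0 1 := hC.apply 0 1
  have hd10 : D 1 0 = D 0 1 := hD.apply 0 1
  have hne10 : (![(1:ℝ),0] : Fin 2 → ℝ) ≠ 0 := fun h => by simpa using congrFun h 0
  have hne01 : (![(0:ℝ),1] : Fin 2 → ℝ) ≠ 0 := fun h => by simpa using congrFun h 1
  have hqA : ∀ ξ : Fin 2 → ℝ, ξ ≠ 0 → 0 < ξ ⬝ᵥ A.mulVec ξ := fun ξ hξ => by
    simpa using hLH ξ ![1,0] hξ hne10
  have hqD : ∀ ξ : Fin 2 → ℝ, ξ ≠ 0 → 0 < ξ ⬝ᵥ D.mulVec ξ := fun ξ hξ => by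
    simpa using hLH ξ ![0,1] hξ hne01
  have ha1 : 0 < A 0 0 := by
    simpa [Matrix.mulVec, dotProduct, Fin.sum_univ_two] using hqA ![1,0] hne10
  have ha3 : 0 < A 1 1 := by
    simpa [Matrix.mulVec, dotProduct, Fin.sum_univ_two] using hqA ![0,1] hne01
  have hd1 : 0 < D 0 0 := by
    simpa [Matrix.mulVec, dotProduct, Fin.sum_univ_two] using hqD ![1,0] hne10
  have hd3 : 0 < D 1 1 := by
    simpa [Matrix.mulVec, dotProduct, Fin.sum_univ_two] using hqD ![0,1] hne01
  have hdiscA : (A 0 1)^2 < A 0 0 * A 1 1 := by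
    have hne : (![A 0 1, -(A 0 0)] : Fin 2 → ℝ) ≠ 0 := fun h => by
      have := congrFun h 1; simp at this; exact absurd this (ne_of_gt ha1)
    have h := hqA ![A 0 1, -(A 0 0)] hne
    simp [Matrix.mulVec, dotProduct, Fin.sum_univ_two, ha10] at h
    nlinarith [h, ha1]
  have hdiscD : (D 0 1)^2 < D 0 0 * D 1 1 := by
    have hne : (![D 0 1, -(D 0 0)] : Fin 2 → ℝ) ≠ 0 := fun h => by
      have := congrFun h 1; simp at this; exact absurd this (ne_of_gt hd1)
    have h := hqD ![D 0 1, -(D 0 0)] hne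
    simp [Matrix.mulVec, dotProduct, Fin.sum_univ_two, hd10] at h
    nlinarith [h, hd1]
  have hmix : (B 0 0 + C 0 0)^2 < 4*(A 0 0 * D 0 0) := by
    have hneη : (![2*D 0 0, -(B 0 0 + C 0 0)] : Fin 2 → ℝ) ≠ 0 := fun h => by
      have := congrFun h 0; simp at this; exact absurd this (ne_of_gt hd1)
    have h := hLH ![1,0] ![2*D 0 0, -(B 0 0 + C 0 0)] hne10 hneη
    simp [Matrix.mulVec, dotProduct, Fin.sum_univ_two, Matrix.add_apply] at h
    nlinarith [h, hd1]
  by_cases hAC : (A 0 0*C 1 1 - A 1 1*C 0 0)^2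
      - 4*(A 0 0*C 0 1 - A 0 1*C 0 0)*(A 0 1*C 1 1 - A 1 1*C 0 1) = 0
  · -- C is proportional to A
    obtain ⟨hgl, hgr⟩ := key (A 0 0) (A 0 1) (A 1 1) (C 0 0) (C 0 1) (C 1 1) ha1 hdiscA hAC
    obtain ⟨γ, hC00, hC01, hC11⟩ : ∃ γ : ℝ, C 0 0 = γ*A 0 0 ∧ C 0 1 = γ*A 0 1 ∧ C 1 1 = γ*A 1 1 := by
      refine ⟨C 0 0 / A 0 0, ?_, ?_, ?_⟩ <;> field_simp <;> linarith
    by_cases hBD : (D 0 0*B 1 1 - D 1 1*B 0 0)^2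
        - 4*(D 0 0*B 0 1 - D 0 1*B 0 0)*(D 0 1*B 1 1 - D 1 1*B 0 1) = 0
    · -- B is proportional to D
      obtain ⟨hsl, hsr⟩ := key (D 0 0) (D 0 1) (D 1 1) (B 0 0) (B 0 1) (B 1 1) hd1 hdiscD hBD
      obtain ⟨σ, hB00, hB01, hB11⟩ : ∃ σ : ℝ, B 0 0 = σ*D 0 0 ∧ B 0 1 = σ*D 0 1 ∧ B 1 1 = σ*D 1 1 := by
        refine ⟨B 0 0 / D 0 0, ?_, ?_, ?_⟩ <;> field_simp <;> linarith
      by_cases hAD : (A 0 0*D 1 1 - A 1 1*D 0 0)^2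
          - 4*(A 0 0*D 0 1 - A 0 1*D 0 0)*(A 0 1*D 1 1 - A 1 1*D 0 1) = 0
      · -- D proportional to A: contradiction with hnot
        obtain ⟨hdl, hdr⟩ := key (A 0 0) (A 0 1) (A 1 1) (D 0 0) (D 0 1) (D 1 1) ha1 hdiscA hAD
        obtain ⟨δ, hD00, hD01, hD11⟩ : ∃ δ : ℝ, D 0 0 = δ*A 0 0 ∧ D 0 1 = δ*A 0 1 ∧ D 1 1 = δ*A 1 1 := by
          refine ⟨D 0 0 / A 0 0, ?_, ?_, ?_⟩ <;> field_simp <;> linarith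
        refine absurd ⟨σ*δ, γ, δ, ?_, ?_, ?_⟩ hnot
        · ext i j; fin_cases i <;> fin_cases j <;>
            simp only [Matrix.smul_apply, smul_eq_mul, Fin.zero_eta, Fin.mk_one]
          · rw [hB00, hD00]; ring
          · rw [hB01, hD01]; ring
          · rw [hb10, hB01, hD01, ha10]; ring
          · rw [hB11, hD11]; ring
        · ext i j; fin_cases i <;> fin_cases j <;>
            simp only [Matrix.smul_apply, smul_eq_mul, Fin.zero_eta, Fin.mk_one]
          · exact hC00
          · exact hC01
          · rw [hc10, hC01, ha10]
          · exact hC11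
        · ext i j; fin_cases i <;> fin_cases j <;>
            simp only [Matrix.smul_apply, smul_eq_mul, Fin.zero_eta, Fin.mk_one]
          · exact hD00
          · exact hD01
          · rw [hd10, hD01, ha10]
          · exact hD11
      · -- use direction (co, si) = (√2/2, √2/2)
        have hsg : σ*γ ≠ 1 := by
          intro h1
          rw [hB00, hC00] at hmix
          have h4 : 4*(A 0 0 * D 0 0) = 4*σ*γ*(A 0 0 * D 0 0) := by
            linear_combination (-4*(A 0 0 * D 0 0))*h1
          nlinarith [sq_nonneg (σ*D 0 0 - γ*A 0 0), hmix, h4]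
        set t : ℝ := Real.sqrt 2 / 2 with ht
        have ht0 : t ≠ 0 := by
          have : (0:ℝ) < Real.sqrt 2 := Real.sqrt_pos.mpr (by norm_num)
          rw [ht]; positivity
        have hcs : t^2 + t^2 = 1 := by
          rw [ht, div_pow, Real.sq_sqrt (by norm_num : (0:ℝ) ≤ 2)]; norm_num
        have hdetid := detMxtt A B C D t σ γ hB00 hB01 hB11 hC00 hC01 hC11
        refine solve A B C D hA hB hC hD t t hcs ?_
        rw [hdetid]
        exact mul_ne_zero (pow_ne_zero 4 ht0)
          (mul_ne_zero (pow_ne_zero 2 (sub_ne_zero.mpr hsg)) hAD)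
    · -- use direction (co, si) = (1, 0)
      refine solve A B C D hA hB hC hD 1 0 (by norm_num) ?_
      have hdetid := detMx10 A B C D
      rw [hdetid]; exact hBD
  · -- use direction (co, si) = (0, 1)
    refine solve A B C D hA hB hC hD 0 1 (by norm_num) ?_
    have hdetid := detMx01 A B C D
    rw [hdetid]; exact hAC
end

section
/- Let a, b, c, d ∈ ℝ and ρ > 0 satisfy 2 + bρ² > 0 and 3 + dρ² > 0. Define u : ℝ² → ℝ² by u¹(x,y) = x(x²+y²), u²(x,y) = y + q(x,y) with q(x,y) = (1/2)(a x³/3 + b x²y + c xy² + d y³/3). Then the restriction of u to the circle of radius ρ centered at the origin is injective. -/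
theorem stmt12 (a b c d ρ : ℝ) (hρ : 0 < ρ)
    (h1 : 0 < 2 + b * ρ^2) (h2 : 0 < 3 + d * ρ^2)
    (q : ℝ × ℝ → ℝ)
    (hq : ∀ p : ℝ × ℝ, q p = (1/2) * (a * p.1^3/3 + b * p.1^2 * p.2
        + c * p.1 * p.2^2 + d * p.2^3/3))
    (u : ℝ × ℝ → ℝ × ℝ)
    (hu : ∀ p : ℝ × ℝ, u p = (p.1 * (p.1^2 + p.2^2), p.2 + q p)) :
    Set.InjOn u {p : ℝ × ℝ | p.1^2 + p.2^2 = ρ^2} := by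
  intro p₁ h₁ p₂ h₂ he
  simp only [Set.mem_setOf_eq] at h₁ h₂
  rw [hu p₁, hu p₂, hq p₁, hq p₂] at he
  have e1 := congrArg Prod.fst he
  have e2 := congrArg Prod.snd he
  simp only at e1 e2
  rw [h₁, h₂] at e1
  have hρ2 : (0:ℝ) < ρ^2 := by positivity
  have hx : p₁.1 = p₂.1 := by
    have := mul_right_cancel₀ (ne_of_gt hρ2) e1
    exact this
  have hy2 : p₁.2^2 = p₂.2^2 := by
    have : p₁.1^2 = p₂.1^2 := by rw [hx]
    linarith
  have hxle : p₁.1^2 ≤ ρ^2 := by nlinarith [sq_nonneg p₁.2]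
  have hx0 : 0 ≤ p₁.1^2 := sq_nonneg _
  have hpos : 0 < 6 + 3*b*p₁.1^2 + d*p₁.2^2 := by
    have hy1 : p₁.2^2 = ρ^2 - p₁.1^2 := by linarith
    rw [hy1]
    nlinarith [mul_nonneg hx0 h1.le, mul_nonneg (sub_nonneg.mpr hxle) h2.le,
      mul_pos hρ2 h1, mul_pos hρ2 h2]
  have h0 : (p₁.2 - p₂.2) * (6 + 3*b*p₁.1^2 + d*p₁.2^2) = 0 := by
    have hy3 : p₂.2^3 = p₂.2 * p₁.2^2 := by rw [hy2]; ring
    rw [← hx] at e2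
    linear_combination (6:ℝ)*e2 - 3*c*p₁.1*hy2 + d*hy3
  have hy : p₁.2 = p₂.2 := by
    rcases mul_eq_zero.mp h0 with h | h
    · linarith
    · linarith
  exact Prod.ext hx hy
end

section
/- Let A, B, C, D be real symmetric 2×2 matrices satisfying the Legendre–Hadamard ellipticity condition, with A and D positive definite. Suppose B = σD and C = γA for some σ, γ ∈ ℝ, and suppose that for some θ with −sin θ·A + cos θ·B positive definite there exists φ with cos φ(−sin θ·A + cos θ·B) + sin φ(−sin θ·C + cos θ·D) = 0. Then, under the additional hypothesis that this holds for all θ in an open interval around 3π/2, the matrix D is a scalar multiple of A. -/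
open Matrix Real

set_option maxHeartbeats 1000000

private lemma stmt19_aux1 (A B C D : Matrix (Fin 2) (Fin 2) ℝ)
    (hLH : ∀ ξ η : Fin 2 → ℝ, ξ ≠ 0 → η ≠ 0 →
      0 < (η 0)^2 * (ξ ⬝ᵥ A.mulVec ξ) + (η 0) * (η 1) * (ξ ⬝ᵥ (B + C).mulVec ξ)
          + (η 1)^2 * (ξ ⬝ᵥ D.mulVec ξ))
    (σ γ : ℝ) (hBD : B = σ • D) (hCA : C = γ • A)
    (hA00 : 0 < A 0 0) (hD00 : 0 < D 0 0) (hσγ : σ * γ = 1) : False := by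
  set a : ℝ := A 0 0 with ha
  set d : ℝ := D 0 0 with hd
  set m : ℝ := σ * d + γ * a with hm
  have hone : (![1,0] : Fin 2 → ℝ) ≠ 0 := by
    intro hcontra; simpa using congrFun hcontra 0
  have hη : (![-m, 2*a] : Fin 2 → ℝ) ≠ 0 := by
    intro hcontra
    have := congrFun hcontra 1
    simp at this
    linarith
  have hLHv := hLH ![1,0] ![-m, 2*a] hone hη
  have e1 : (![1,0] : Fin 2 → ℝ) ⬝ᵥ A.mulVec ![1,0] = a := by
    simp [dotProduct, Matrix.mulVec, Fin.sum_univ_two, ha]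
  have e2 : (![1,0] : Fin 2 → ℝ) ⬝ᵥ D.mulVec ![1,0] = d := by
    simp [dotProduct, Matrix.mulVec, Fin.sum_univ_two, hd]
  have e3 : (![1,0] : Fin 2 → ℝ) ⬝ᵥ (B + C).mulVec ![1,0] = m := by
    rw [hBD, hCA]
    simp [dotProduct, Matrix.mulVec, Fin.sum_univ_two, Matrix.add_apply, Matrix.smul_apply,
      hm, ha, hd]
  rw [e1, e2, e3] at hLHv
  simp at hLHv
  rw [hm] at hLHv
  have h5 : 0 ≤ a * (σ * d - γ * a)^2 := by positivity
  have h6 : σ * γ * (a ^ 2 * d) = 1 * (a ^ 2 * d) := by rw [hσγ]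
  nlinarith [h5, h6]

private lemma stmt19_aux2 (A D : Matrix (Fin 2) (Fin 2) ℝ) (α β : ℝ)
    (hmat : α • A + β • D = 0) (hβ : β ≠ 0) : ∃ t : ℝ, D = t • A := by
  refine ⟨-α / β, ?_⟩
  ext i j
  have hk := congrFun (congrFun hmat i) j
  simp [Matrix.add_apply, Matrix.smul_apply] at hk ⊢
  field_simp
  linarith

theorem stmt19 (A B C D : Matrix (Fin 2) (Fin 2) ℝ)
    (hA : A.IsSymm) (hB : B.IsSymm) (hC : C.IsSymm) (hD : D.IsSymm)
    (hLH : ∀ ξ η : Fin 2 → ℝ, ξ ≠ 0 → η ≠ 0 →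
      0 < (η 0)^2 * (ξ ⬝ᵥ A.mulVec ξ) + (η 0) * (η 1) * (ξ ⬝ᵥ (B + C).mulVec ξ)
          + (η 1)^2 * (ξ ⬝ᵥ D.mulVec ξ))
    (hApos : ∀ x : Fin 2 → ℝ, x ≠ 0 → 0 < x ⬝ᵥ A.mulVec x)
    (hDpos : ∀ x : Fin 2 → ℝ, x ≠ 0 → 0 < x ⬝ᵥ D.mulVec x)
    (σ γ : ℝ) (hBD : B = σ • D) (hCA : C = γ • A)
    (h : ∃ ε > (0:ℝ), ∀ θ : ℝ, |θ - 3 * Real.pi / 2| < ε →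
      (∀ x : Fin 2 → ℝ, x ≠ 0 →
        0 < x ⬝ᵥ (-Real.sin θ • A + Real.cos θ • B).mulVec x) →
      ∃ φ : ℝ,
        Real.cos φ • (-Real.sin θ • A + Real.cos θ • B)
          + Real.sin φ • (-Real.sin θ • C + Real.cos θ • D) = 0) :
    ∃ t : ℝ, D = t • A := by
  obtain ⟨ε, hε, hthm⟩ := h
  have hπ := Real.pi_pos
  obtain ⟨δ, hδpos, hδlt, hδε⟩ : ∃ δ : ℝ, 0 < δ ∧ δ < π/2 ∧ δ < ε :=
    ⟨min (ε/2) (π/4), lt_min (by linarith) (by linarith),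
      lt_of_le_of_lt (min_le_right _ _) (by linarith),
      lt_of_le_of_lt (min_le_left _ _) (by linarith)⟩
  have hsinδ : 0 < Real.sin δ := Real.sin_pos_of_pos_of_lt_pi hδpos (by linarith)
  have hcosδ : 0 < Real.cos δ := Real.cos_pos_of_mem_Ioo ⟨by linarith, hδlt⟩
  obtain ⟨e, he2, heσ⟩ : ∃ e : ℝ, (e = 1 ∨ e = -1) ∧ 0 ≤ e * σ := by
    rcases le_or_gt 0 σ with h0 | h0
    · exact ⟨1, Or.inl rfl, by linarith⟩
    · exact ⟨-1, Or.inr rfl, by nlinarith⟩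
  set θ : ℝ := 3 * π / 2 + e * δ with hθ
  have habs : |e| = 1 := by rcases he2 with h|h <;> simp [h]
  have hdist : |θ - 3 * Real.pi / 2| < ε := by
    have h1 : θ - 3 * Real.pi / 2 = e * δ := by rw [hθ]; ring
    rw [h1, abs_mul, habs, one_mul, abs_of_pos hδpos]
    exact hδε
  have h32s : Real.sin (3 * π / 2) = -1 := by
    rw [show (3 * π / 2 : ℝ) = π + π/2 by ring, Real.sin_add]; simp
  have h32c : Real.cos (3 * π / 2) = 0 := by
    rw [show (3 * π / 2 : ℝ) = π + π/2 by ring, Real.cos_add]; simp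
  have hsinθ : Real.sin θ = -Real.cos δ := by
    rw [hθ, Real.sin_add, h32s, h32c]
    rcases he2 with h|h <;> simp [h]
  have hcosθ : Real.cos θ = e * Real.sin δ := by
    rw [hθ, Real.cos_add, h32s, h32c]
    rcases he2 with h|h <;> simp [h] <;> ring
  clear_value θ
  clear hθ
  -- positivity premise
  have hpos : ∀ x : Fin 2 → ℝ, x ≠ 0 →
      0 < x ⬝ᵥ (-Real.sin θ • A + Real.cos θ • B).mulVec x := by
    intro x hx
    have hxA := hApos x hx
    have hxD := hDpos x hx
    have hkey : x ⬝ᵥ (-Real.sin θ • A + Real.cos θ • B).mulVec x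
        = (-Real.sin θ) * (x ⬝ᵥ A.mulVec x) + (Real.cos θ * σ) * (x ⬝ᵥ D.mulVec x) := by
      rw [hBD]
      simp only [Matrix.add_mulVec, Matrix.smul_mulVec, dotProduct_add, dotProduct_smul,
        smul_smul, smul_eq_mul, neg_smul, Matrix.neg_mulVec, dotProduct_neg]
      ring
    rw [hkey, hsinθ, hcosθ]
    have h1 : 0 ≤ (e * Real.sin δ * σ) * (x ⬝ᵥ D.mulVec x) := by
      have h2 : 0 ≤ e * σ * Real.sin δ := by positivity
      nlinarith
    nlinarith
  obtain ⟨φ, hφ⟩ := hthm θ hdist hpos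
  rw [hBD, hCA] at hφ
  set s : ℝ := Real.cos δ with hs
  set c : ℝ := Real.cos θ with hc
  have hcne : c ≠ 0 := by
    rw [hcosθ]; rcases he2 with h|h <;> rw [h] <;> simp <;> linarith
  have hmat : (s * Real.cos φ + s * γ * Real.sin φ) • A
      + (c * σ * Real.cos φ + c * Real.sin φ) • D = 0 := by
    rw [← hφ, hsinθ]
    module
  by_cases hβ0 : c * σ * Real.cos φ + c * Real.sin φ = 0
  · exfalso
    have hone : (![1,0] : Fin 2 → ℝ) ≠ 0 := by
      intro hcontra; simpa using congrFun hcontra 0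
    have hA00 : 0 < A 0 0 := by
      have := hApos ![1,0] hone
      simpa [dotProduct, Matrix.mulVec, Fin.sum_univ_two] using this
    have hD00 : 0 < D 0 0 := by
      have := hDpos ![1,0] hone
      simpa [dotProduct, Matrix.mulVec, Fin.sum_univ_two] using this
    have hα0 : s * Real.cos φ + s * γ * Real.sin φ = 0 := by
      have hk := congrFun (congrFun hmat 0) 0
      rw [hβ0] at hk
      simp [Matrix.add_apply, Matrix.smul_apply] at hk
      rcases hk with h' | h'
      · exact h'
      · linarith
    have hsne : s ≠ 0 := ne_of_gt hcosδ
    have h1 : Real.cos φ + γ * Real.sin φ = 0 := by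
      have h' : s * (Real.cos φ + γ * Real.sin φ) = 0 := by rw [← hα0]; ring
      rcases mul_eq_zero.mp h' with h'' | h''
      · exact absurd h'' hsne
      · exact h''
    have h2 : σ * Real.cos φ + Real.sin φ = 0 := by
      have h' : c * (σ * Real.cos φ + Real.sin φ) = 0 := by rw [← hβ0]; ring
      rcases mul_eq_zero.mp h' with h'' | h''
      · exact absurd h'' hcne
      · exact h''
    have hpyth := Real.sin_sq_add_cos_sq φ
    have hσγ : σ * γ = 1 := by
      by_contra hne
      have hz : (1 - σ * γ) * Real.sin φ = 0 := by linear_combination h2 - σ * h1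
      have hsφ : Real.sin φ = 0 := by
        rcases mul_eq_zero.mp hz with h' | h'
        · exact absurd (by linarith : σ * γ = 1) hne
        · exact h'
      have hcφ : Real.cos φ = 0 := by
        rw [hsφ] at h1; linarith [h1]
      rw [hsφ, hcφ] at hpyth
      norm_num at hpyth
    exact stmt19_aux1 A B C D hLH σ γ hBD hCA hA00 hD00 hσγ
  · exact stmt19_aux2 A D _ _ hmat hβ0
end
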